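/- arXiv:1710.11572 — 4 statements merged into one kernel-verified Lean document; each statement's English description precedes it below -/
import Mathlib

section
/- Let X be a Banach space, A a bounded linear operator on X, and P, Q complementary bounded projections on X. Then AP + Q is invertible if and only if PA + Q is invertible. -/
lemma isUnit_mul_unit_right {R : Type*} [Ring R] {x u : R} (hu : IsUnit u) :
    IsUnit (x * u) ↔ IsUnit x := by
  constructor
  · intro h
    have : x = (x * u) * ↑hu.unit⁻¹ := by
      rw [mul_assoc, IsUnit.mul_val_inv, mul_one]
    rw [this]
    exact h.mul (hu.unit⁻¹).isUnit
  · exact fun h => h.mul hu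

lemma isUnit_unit_mul_left {R : Type*} [Ring R] {x u : R} (hu : IsUnit u) :
    IsUnit (u * x) ↔ IsUnit x := by
  constructor
  · intro h
    have : x = ↑hu.unit⁻¹ * (u * x) := by
      rw [← mul_assoc, IsUnit.val_inv_mul, one_mul]
    rw [this]
    exact (hu.unit⁻¹).isUnit.mul h
  · exact fun h => hu.mul h

/-- If `P, Q` are complementary bounded projections on a Banach space `X` and `A` is a
bounded operator, then `AP + Q` is invertible iff `PA + Q` is invertible. -/
theorem paired_invertible_iff {X : Type*} [NormedAddCommGroup X] [NormedSpace ℂ X] [CompleteSpace X]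
    (A P Q : X →L[ℂ] X) (hP : P * P = P) (hQ : Q * Q = Q) (hPQ : P + Q = 1) :
    IsUnit (A * P + Q) ↔ IsUnit (P * A + Q) := by
  have hQP : Q * P = 0 := by
    have h : Q = 1 - P := by rw [← hPQ]; noncomm_ring
    rw [h, sub_mul, one_mul, hP, sub_self]
  have hPQ0 : P * Q = 0 := by
    have h : Q = 1 - P := by rw [← hPQ]; noncomm_ring
    rw [h, mul_sub, mul_one, hP, sub_self]
  have hu : IsUnit (1 + Q * A * P) := by
    have hnil : (Q * A * P) * (Q * A * P) = 0 := by
      calc Q * A * P * (Q * A * P) = Q * A * (P * Q) * A * P := by noncomm_ring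
      _ = 0 := by rw [hPQ0]; noncomm_ring
    refine ⟨⟨1 + Q * A * P, 1 - Q * A * P, ?_, ?_⟩, rfl⟩
    · calc (1 + Q * A * P) * (1 - Q * A * P)
          = 1 - (Q * A * P) * (Q * A * P) := by noncomm_ring
      _ = 1 := by rw [hnil, sub_zero]
    · calc (1 - Q * A * P) * (1 + Q * A * P)
          = 1 - (Q * A * P) * (Q * A * P) := by noncomm_ring
      _ = 1 := by rw [hnil, sub_zero]
  have hv : IsUnit (1 + P * A * Q) := by
    have hnil : (P * A * Q) * (P * A * Q) = 0 := by
      calc P * A * Q * (P * A * Q) = P * A * (Q * P) * A * Q := by noncomm_ring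
      _ = 0 := by rw [hQP]; noncomm_ring
    refine ⟨⟨1 + P * A * Q, 1 - P * A * Q, ?_, ?_⟩, rfl⟩
    · calc (1 + P * A * Q) * (1 - P * A * Q)
          = 1 - (P * A * Q) * (P * A * Q) := by noncomm_ring
      _ = 1 := by rw [hnil, sub_zero]
    · calc (1 - P * A * Q) * (1 + P * A * Q)
          = 1 - (P * A * Q) * (P * A * Q) := by noncomm_ring
      _ = 1 := by rw [hnil, sub_zero]
  have e1 : A * P + Q = (P * A * P + Q) * (1 + Q * A * P) := by
    have : (P * A * P + Q) * (1 + Q * A * P)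
        = P * A * P + Q + P * A * (P * Q) * A * P + (Q * Q) * A * P := by noncomm_ring
    rw [this, hPQ0, hQ]
    have hAP : A * P = P * A * P + Q * A * P := by
      calc A * P = (P + Q) * A * P := by rw [hPQ, one_mul]
      _ = P * A * P + Q * A * P := by noncomm_ring
    conv_lhs => rw [hAP]
    noncomm_ring
  have e2 : P * A + Q = (1 + P * A * Q) * (P * A * P + Q) := by
    have : (1 + P * A * Q) * (P * A * P + Q)
        = P * A * P + Q + P * A * (Q * P) * A * P + P * A * (Q * Q) := by noncomm_ring
    rw [this, hQP, hQ]
    have hPA : P * A = P * A * P + P * A * Q := by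
      calc P * A = P * A * (P + Q) := by rw [hPQ, mul_one]
      _ = P * A * P + P * A * Q := by noncomm_ring
    conv_lhs => rw [hPA]
    noncomm_ring
  rw [e1, e2, isUnit_mul_unit_right hu, isUnit_unit_mul_left hv]
end

section
/- Suppose T : X → X̃ and S : Y → Ỹ are bounded linear operators between Banach spaces that are equivalent after extension, i.e., there are Banach spaces X₀, Y₀ and invertible bounded linear operators E : Ỹ ⊕ Y₀ → X̃ ⊕ X₀ and F : X ⊕ X₀ → Y ⊕ Y₀ with (T ⊕ I_{X₀}) = E (S ⊕ I_{Y₀}) F. Then the kernel of T is isomorphic (as a topological vector space) to the kernel of S. -/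
/-!
Since `E` is injective, `F` maps `ker (T ⊕ I) = ker T × {0}` onto `ker (S ⊕ I) = ker S × {0}`,
and the first projection identifies each of these with `ker T`, resp. `ker S`.
-/

open LinearMap

namespace Submodule

variable {R M M₂ : Type*} [Semiring R] [AddCommMonoid M] [Module R M] [TopologicalSpace M]
  [AddCommMonoid M₂] [Module R M₂] [TopologicalSpace M₂]

def prodBotEquiv (p : Submodule R M) : p.prod (⊥ : Submodule R M₂) ≃L[R] p :=
  ContinuousLinearEquiv.equivOfInverse
    (((ContinuousLinearMap.fst R M M₂).comp (p.prod ⊥).subtypeL).codRestrict p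
      fun x => (mem_prod.mp x.2).1)
    (((ContinuousLinearMap.inl R M M₂).comp p.subtypeL).codRestrict (p.prod ⊥)
      fun x => mem_prod.mpr ⟨x.2, zero_mem _⟩)
    (fun x => Subtype.ext <| Prod.ext rfl (mem_bot R |>.mp (mem_prod.mp x.2).2).symm)
    (fun _ => rfl)

end Submodule

namespace ContinuousLinearMap

variable {R M N M' N' M₀ : Type*} [Semiring R]
  [AddCommMonoid M] [Module R M] [TopologicalSpace M]
  [AddCommMonoid N] [Module R N] [TopologicalSpace N]
  [AddCommMonoid M'] [Module R M'] [TopologicalSpace M']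
  [AddCommMonoid N'] [Module R N'] [TopologicalSpace N']
  [AddCommMonoid M₀] [Module R M₀] [TopologicalSpace M₀]

def kerProdMapIdEquiv (A : M →L[R] N) :
    ker (A.prodMap (ContinuousLinearMap.id R M₀) : M × M₀ →ₗ[R] N × M₀) ≃L[R]
      ker (A : M →ₗ[R] N) :=
  (ContinuousLinearEquiv.ofEq _ _
    (by simp only [coe_prodMap, coe_id, ker_prodMap, ker_id])).trans
    (ker (A : M →ₗ[R] N)).prodBotEquiv

theorem ker_equiv_comp_comp_equiv (E : N' ≃L[R] N) (B : M' →L[R] N') (F : M ≃L[R] M') :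
    ker ((E : N' →L[R] N) ∘L B ∘L (F : M →L[R] M') : M →ₗ[R] N) =
      (ker (B : M' →ₗ[R] N')).comap (F : M →ₗ[R] M') := by
  ext x
  simp

def kerEquivOfEqEquivCompEquiv {A : M →L[R] N} {B : M' →L[R] N'} (E : N' ≃L[R] N)
    (F : M ≃L[R] M') (h : A = (E : N' →L[R] N) ∘L B ∘L (F : M →L[R] M')) :
    ker (A : M →ₗ[R] N) ≃L[R] ker (B : M' →ₗ[R] N') :=
  (ContinuousLinearEquiv.ofEq _ _ (h ▸ ker_equiv_comp_comp_equiv E B F)).trans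
    (F.ofSubmodule' _)

end ContinuousLinearMap

theorem eae_ker_iso_general {X X' Y Y' X₀ Y₀ : Type*} [NormedAddCommGroup X] [NormedSpace ℂ X] [NormedAddCommGroup X'] [NormedSpace ℂ X'] [NormedAddCommGroup Y] [NormedSpace ℂ Y] [NormedAddCommGroup Y'] [NormedSpace ℂ Y'] [NormedAddCommGroup X₀] [NormedSpace ℂ X₀] [NormedAddCommGroup Y₀] [NormedSpace ℂ Y₀]
    (T : X →L[ℂ] X') (S : Y →L[ℂ] Y')
    (E : (Y' × Y₀) ≃L[ℂ] (X' × X₀)) (F : (X × X₀) ≃L[ℂ] (Y × Y₀))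
    (h : T.prodMap (ContinuousLinearMap.id ℂ X₀) =
      (E : (Y' × Y₀) →L[ℂ] (X' × X₀)) ∘L
        (S.prodMap (ContinuousLinearMap.id ℂ Y₀)) ∘L (F : (X × X₀) →L[ℂ] (Y × Y₀))) :
    Nonempty ((LinearMap.ker (T : X →ₗ[ℂ] X')) ≃L[ℂ] (LinearMap.ker (S : Y →ₗ[ℂ] Y'))) :=
  ⟨T.kerProdMapIdEquiv.symm.trans
    ((ContinuousLinearMap.kerEquivOfEqEquivCompEquiv E F h).trans S.kerProdMapIdEquiv)⟩

/-- If `T` and `S` are equivalent after extension, i.e. `T ⊕ I = E (S ⊕ I) F` with `E, F`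
invertible bounded operators, then `ker T` and `ker S` are isomorphic as topological
vector spaces. -/
theorem eae_ker_iso {X X' Y Y' X₀ Y₀ : Type*} [NormedAddCommGroup X] [NormedSpace ℂ X] [CompleteSpace X] [NormedAddCommGroup X'] [NormedSpace ℂ X'] [CompleteSpace X'] [NormedAddCommGroup Y] [NormedSpace ℂ Y] [CompleteSpace Y] [NormedAddCommGroup Y'] [NormedSpace ℂ Y'] [CompleteSpace Y'] [NormedAddCommGroup X₀] [NormedSpace ℂ X₀] [CompleteSpace X₀] [NormedAddCommGroup Y₀] [NormedSpace ℂ Y₀] [CompleteSpace Y₀]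
    (T : X →L[ℂ] X') (S : Y →L[ℂ] Y')
    (E : (Y' × Y₀) ≃L[ℂ] (X' × X₀)) (F : (X × X₀) ≃L[ℂ] (Y × Y₀))
    (h : T.prodMap (ContinuousLinearMap.id ℂ X₀) =
      (E : (Y' × Y₀) →L[ℂ] (X' × X₀)) ∘L
        (S.prodMap (ContinuousLinearMap.id ℂ Y₀)) ∘L (F : (X × X₀) →L[ℂ] (Y × Y₀))) :
    Nonempty ((LinearMap.ker (T : X →ₗ[ℂ] X')) ≃L[ℂ] (LinearMap.ker (S : Y →ₗ[ℂ] Y'))) :=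
  eae_ker_iso_general T S E F h
end

section
/- Suppose T : X → X̃ and S : Y → Ỹ are equivalent after extension. Then the range of T is closed if and only if the range of S is closed. -/
open Set

theorem isClosed_prod_univ_iff {α β : Type*} [TopologicalSpace α] [TopologicalSpace β]
    [Nonempty β] {s : Set α} : IsClosed (s ×ˢ (univ : Set β)) ↔ IsClosed s := by
  refine ⟨fun h => ?_, fun h => h.prod isClosed_univ⟩
  obtain ⟨b⟩ := ‹Nonempty β›
  simpa using h.preimage (continuous_id.prodMk (continuous_const (y := b)))

theorem isClosed_range_prodMap_id_iff {α β γ : Type*} [TopologicalSpace β]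
    [TopologicalSpace γ] [Nonempty γ] (f : α → β) :
    IsClosed (range (Prod.map f (id : γ → γ))) ↔ IsClosed (range f) := by
  rw [range_prodMap, range_id, isClosed_prod_univ_iff]

theorem Homeomorph.isClosed_range_comp_comp_iff {α β γ δ : Type*} [TopologicalSpace γ]
    [TopologicalSpace δ] (e : γ ≃ₜ δ) (g : β → γ) {f : α → β} (hf : f.Surjective) :
    IsClosed (range (e ∘ g ∘ f)) ↔ IsClosed (range g) := by
  rw [range_comp, hf.range_comp, e.isClosed_image]

theorem eae_closed_range_iff_general {X X' Y Y' X₀ Y₀ : Type*} [NormedAddCommGroup X] [NormedSpace ℂ X] [NormedAddCommGroup X'] [NormedSpace ℂ X'] [NormedAddCommGroup Y] [NormedSpace ℂ Y] [NormedAddCommGroup Y'] [NormedSpace ℂ Y'] [NormedAddCommGroup X₀] [NormedSpace ℂ X₀] [NormedAddCommGroup Y₀] [NormedSpace ℂ Y₀]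
    (T : X →L[ℂ] X') (S : Y →L[ℂ] Y')
    (E : (Y' × Y₀) ≃L[ℂ] (X' × X₀)) (F : (X × X₀) ≃L[ℂ] (Y × Y₀))
    (h : T.prodMap (ContinuousLinearMap.id ℂ X₀) =
      (E : (Y' × Y₀) →L[ℂ] (X' × X₀)) ∘L
        (S.prodMap (ContinuousLinearMap.id ℂ Y₀)) ∘L (F : (X × X₀) →L[ℂ] (Y × Y₀))) :
    IsClosed (Set.range T) ↔ IsClosed (Set.range S) := by
  have h' : Prod.map T (id : X₀ → X₀) = E ∘ Prod.map S (id : Y₀ → Y₀) ∘ F :=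
    congrArg DFunLike.coe h
  rw [← isClosed_range_prodMap_id_iff (γ := X₀), ← isClosed_range_prodMap_id_iff (γ := Y₀) S, h']
  exact E.toHomeomorph.isClosed_range_comp_comp_iff _ F.surjective

/-- If `T` and `S` are equivalent after extension, then `T` has closed range iff `S`
has closed range. -/
theorem eae_closed_range_iff {X X' Y Y' X₀ Y₀ : Type*} [NormedAddCommGroup X] [NormedSpace ℂ X] [CompleteSpace X] [NormedAddCommGroup X'] [NormedSpace ℂ X'] [CompleteSpace X'] [NormedAddCommGroup Y] [NormedSpace ℂ Y] [CompleteSpace Y] [NormedAddCommGroup Y'] [NormedSpace ℂ Y'] [CompleteSpace Y'] [NormedAddCommGroup X₀] [NormedSpace ℂ X₀] [CompleteSpace X₀] [NormedAddCommGroup Y₀] [NormedSpace ℂ Y₀] [CompleteSpace Y₀]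
    (T : X →L[ℂ] X') (S : Y →L[ℂ] Y')
    (E : (Y' × Y₀) ≃L[ℂ] (X' × X₀)) (F : (X × X₀) ≃L[ℂ] (Y × Y₀))
    (h : T.prodMap (ContinuousLinearMap.id ℂ X₀) =
      (E : (Y' × Y₀) →L[ℂ] (X' × X₀)) ∘L
        (S.prodMap (ContinuousLinearMap.id ℂ Y₀)) ∘L (F : (X × X₀) →L[ℂ] (Y × Y₀))) :
    IsClosed (Set.range T) ↔ IsClosed (Set.range S) :=
  eae_closed_range_iff_general T S E F h
end

section
/- Let R be a rational function with complex coefficients having no zeros and no poles on the real line and with a finite nonzero limit at infinity (deg numerator = deg denominator). Then the winding number of R restricted to ℝ (compactified) about the origin equals the number of zeros of R in the upper half-plane minus the number of poles of R in the upper half-plane (counted with multiplicity). -/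
open Polynomial

/-! On `ℝ` the logarithmic derivative of `P / Q` is `∑ (x - a)⁻¹ - ∑ (x - b)⁻¹`, with `a` running
over the roots of `P` and `b` over those of `Q`. As `deg P = deg Q`, subtracting `(x - i)⁻¹` from
every term leaves this unchanged and makes each term `O(x⁻²)`, hence integrable. For `a ∉ ℝ` the
principal branch `log (x - a)` is a primitive of `(x - a)⁻¹` on all of `ℝ`; it equals
`log |x| + o(1)` at `+∞` and `log |x| - πi · sign (Im a) + o(1)` at `-∞`. Hence
`∫ (x - a)⁻¹ - (x - b)⁻¹ = 2πi ([Im a > 0] - [Im b > 0])`, and summing over the roots counts those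
in the upper half-plane. -/

open Complex Filter MeasureTheory Topology Asymptotics
open scoped Real

section
variable {ι α E : Type*} [MeasurableSpace α] {μ : Measure α} [NormedAddCommGroup E]

theorem MeasureTheory.integrable_multiset_sum_map (s : Multiset ι) {f : ι → α → E}
    (hf : ∀ i ∈ s, Integrable (f i) μ) : Integrable (fun x => (s.map fun i => f i x).sum) μ := by
  induction s using Multiset.induction with
  | empty => simp
  | cons i s ih =>
    simp only [Multiset.map_cons, Multiset.sum_cons]
    exact (hf i (s.mem_cons_self i)).add (ih fun j hj => hf j (Multiset.mem_cons_of_mem hj))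

theorem MeasureTheory.integral_multiset_sum_map [NormedSpace ℝ E] (s : Multiset ι)
    {f : ι → α → E} (hf : ∀ i ∈ s, Integrable (f i) μ) :
    ∫ x, (s.map fun i => f i x).sum ∂μ = (s.map fun i => ∫ x, f i x ∂μ).sum := by
  induction s using Multiset.induction with
  | empty => simp
  | cons i s ih =>
    have hs : ∀ j ∈ s, Integrable (f j) μ := fun j hj => hf j (Multiset.mem_cons_of_mem hj)
    simp only [Multiset.map_cons, Multiset.sum_cons]
    rw [integral_add (hf i (s.mem_cons_self i)) (integrable_multiset_sum_map s hs), ih hs]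

theorem Multiset.sum_map_ite_one_zero {R : Type*} [NonAssocSemiring R] (s : Multiset ι)
    (p : ι → Prop) [DecidablePred p] :
    (s.map fun i => if p i then (1 : R) else 0).sum = (s.filter p).card := by
  induction s using Multiset.induction with
  | empty => simp
  | cons i s ih => by_cases h : p i <;> simp [h, ih, add_comm]

end

namespace Complex
variable {a b : ℂ}

lemma ofReal_sub_ne_zero (ha : a.im ≠ 0) (x : ℝ) : (x : ℂ) - a ≠ 0 := fun h =>
  ha (by simpa using congrArg im h)

lemma ofReal_sub_mem_slitPlane (ha : a.im ≠ 0) (x : ℝ) : (x : ℂ) - a ∈ slitPlane :=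
  mem_slitPlane_iff.mpr (Or.inr (by simpa using ha))

lemma hasDerivAt_log_ofReal_sub (ha : a.im ≠ 0) (x : ℝ) :
    HasDerivAt (fun t : ℝ => log ((t : ℂ) - a)) ((x : ℂ) - a)⁻¹ x := by
  simpa using ((ofRealCLM.hasDerivAt (x := x)).sub_const a).clog_real
    (ofReal_sub_mem_slitPlane ha x)

lemma ofReal_sub_ne_zero_of_norm_lt {x : ℝ} (h : ‖a‖ < ‖x‖) : (x : ℂ) - a ≠ 0 :=
  sub_ne_zero.mpr fun hx => (hx ▸ h).ne (norm_real x)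

lemma tendsto_ofReal_inv {l : Filter ℝ} (hl : Tendsto (fun x : ℝ => x⁻¹) l (𝓝 0)) :
    Tendsto (fun x : ℝ => (x : ℂ)⁻¹) l (𝓝 0) := by
  simpa [Function.comp_def] using (continuous_ofReal.tendsto 0).comp hl

lemma ofReal_sub_eq_mul {x : ℝ} (hx : x ≠ 0) (a : ℂ) :
    (x : ℂ) - a = x * (1 - a * (x : ℂ)⁻¹) := by
  have : (x : ℂ) ≠ 0 := ofReal_ne_zero.mpr hx
  field_simp

lemma tendsto_log_ofReal_sub_sub_log_atTop (a : ℂ) :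
    Tendsto (fun x : ℝ => log ((x : ℂ) - a) - Real.log x) atTop (𝓝 0) := by
  have hw : Tendsto (fun x : ℝ => 1 - a * (x : ℂ)⁻¹) atTop (𝓝 1) := by
    simpa using ((tendsto_ofReal_inv tendsto_inv_atTop_zero).const_mul a).const_sub 1
  have h := ((continuousAt_clog one_mem_slitPlane).tendsto).comp hw
  rw [log_one] at h
  refine h.congr' ?_
  filter_upwards [eventually_gt_atTop ‖a‖] with x hx
  have hx0 : (0 : ℝ) < x := (norm_nonneg a).trans_lt hx
  have hne : (x : ℂ) - a ≠ 0 :=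
    ofReal_sub_ne_zero_of_norm_lt (by rwa [Real.norm_of_nonneg hx0.le])
  rw [ofReal_sub_eq_mul hx0.ne'] at hne ⊢
  rw [Function.comp_apply, log_ofReal_mul hx0 (right_ne_zero_of_mul hne)]
  ring

lemma tendsto_log_ofReal_sub_sub_log_neg_atBot (ha : a.im ≠ 0) :
    Tendsto (fun x : ℝ => log ((x : ℂ) - a) - Real.log (-x)) atBot
      (𝓝 (if 0 < a.im then -(π * I) else π * I)) := by
  -- `x - a = (-x) * w x`, and `w x → -1` from the side of the branch cut opposite to `a`.
  set w : ℝ → ℂ := fun x => a * (x : ℂ)⁻¹ - 1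
  have hw : Tendsto w atBot (𝓝 (-1)) := by
    simpa using ((tendsto_ofReal_inv tendsto_inv_atBot_zero).const_mul a).sub_const 1
  have him : ∀ x : ℝ, (w x).im = a.im * x⁻¹ := fun x => by simp [w, ← ofReal_inv]
  have hlog : Tendsto (fun x => log (w x)) atBot (𝓝 (if 0 < a.im then -(π * I) else π * I)) := by
    split_ifs with hpos
    · have hw' : Tendsto w atBot (𝓝[{z : ℂ | z.im < 0}] (-1)) := by
        refine tendsto_nhdsWithin_iff.mpr ⟨hw, ?_⟩
        filter_upwards [eventually_lt_atBot 0] with x hx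
        simpa [him] using mul_neg_of_pos_of_neg hpos (inv_lt_zero.mpr hx)
      simpa [Function.comp_def] using
        (tendsto_log_nhdsWithin_im_neg_of_re_neg_of_im_zero (by simp) (by simp)).comp hw'
    · have hw' : Tendsto w atBot (𝓝[{z : ℂ | 0 ≤ z.im}] (-1)) := by
        refine tendsto_nhdsWithin_iff.mpr ⟨hw, ?_⟩
        filter_upwards [eventually_lt_atBot 0] with x hx
        simpa [him] using mul_nonneg_of_nonpos_of_nonpos (not_lt.mp hpos) (inv_lt_zero.mpr hx).le
      simpa [Function.comp_def] using
        (tendsto_log_nhdsWithin_im_nonneg_of_re_neg_of_im_zero (by simp) (by simp)).comp hw'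
  refine hlog.congr' ?_
  filter_upwards [eventually_lt_atBot 0] with x hx
  have heq : (x : ℂ) - a = ((-x : ℝ) : ℂ) * w x := by
    rw [ofReal_sub_eq_mul hx.ne a]; push_cast [w]; ring
  have hne := ofReal_sub_ne_zero ha x
  rw [heq] at hne ⊢
  rw [log_ofReal_mul (neg_pos.mpr hx) (right_ne_zero_of_mul hne)]
  ring

lemma tendsto_ofReal_inv_cocompact : Tendsto (fun x : ℝ => (x : ℂ)⁻¹) (cocompact ℝ) (𝓝 0) :=
  tendsto_ofReal_inv (Metric.cobounded_eq_cocompact (α := ℝ) ▸ tendsto_inv₀_cobounded)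

lemma isBigO_inv_ofReal_sub_sub_inv_ofReal_sub_cocompact :
    (fun x : ℝ => ((x : ℂ) - a)⁻¹ - ((x : ℂ) - b)⁻¹) =O[cocompact ℝ] fun x => (1 + x ^ 2)⁻¹ := by
  rw [← isBigO_ofReal_right]
  -- In terms of `u = x⁻¹` the quotient is a rational function continuous at `u = 0`.
  have hlim : Tendsto (fun u : ℂ => (a - b) * (1 + u ^ 2) / ((1 - a * u) * (1 - b * u)))
      (𝓝 0) (𝓝 (a - b)) := by
    have : ContinuousAt (fun u : ℂ => (a - b) * (1 + u ^ 2) / ((1 - a * u) * (1 - b * u))) 0 := by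
      fun_prop (disch := simp)
    simpa using this.tendsto
  refine isBigO_of_div_tendsto_nhds (Eventually.of_forall fun x hx => ?_) (a - b)
    ((hlim.comp tendsto_ofReal_inv_cocompact).congr' ?_)
  · exfalso
    have : (1 + x ^ 2 : ℝ)⁻¹ ≠ 0 := by positivity
    exact this (by exact_mod_cast hx)
  · filter_upwards [tendsto_norm_cocompact_atTop.eventually_gt_atTop (‖a‖ + ‖b‖)] with x hx
    have hxa : (x : ℂ) - a ≠ 0 := ofReal_sub_ne_zero_of_norm_lt (by linarith [norm_nonneg b])
    have hxb : (x : ℂ) - b ≠ 0 := ofReal_sub_ne_zero_of_norm_lt (by linarith [norm_nonneg a])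
    have hx0 : (x : ℂ) ≠ 0 := ofReal_ne_zero.mpr
      (norm_pos_iff.mp ((add_nonneg (norm_nonneg a) (norm_nonneg b)).trans_lt hx))
    have h1 : (1 + (x : ℂ) ^ 2) ≠ 0 := by exact_mod_cast (by positivity : (1 + x ^ 2 : ℝ) ≠ 0)
    simp only [Function.comp_apply, Pi.div_apply]
    push_cast
    field_simp
    ring

lemma integrable_inv_ofReal_sub_sub_inv_ofReal_sub (ha : a.im ≠ 0) (hb : b.im ≠ 0) :
    Integrable fun x : ℝ => ((x : ℂ) - a)⁻¹ - ((x : ℂ) - b)⁻¹ := by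
  have hcont : Continuous fun x : ℝ => ((x : ℂ) - a)⁻¹ - ((x : ℂ) - b)⁻¹ :=
    ((continuous_ofReal.sub continuous_const).inv₀ (ofReal_sub_ne_zero ha)).sub
      ((continuous_ofReal.sub continuous_const).inv₀ (ofReal_sub_ne_zero hb))
  exact hcont.locallyIntegrable.integrable_of_isBigO_cocompact
    isBigO_inv_ofReal_sub_sub_inv_ofReal_sub_cocompact
    (integrable_inv_one_add_sq.integrableAtFilter _)

lemma integrable_multiset_sum_inv_ofReal_sub_sub_inv_ofReal_sub {s : Multiset ℂ}
    (hs : ∀ a ∈ s, a.im ≠ 0) (hb : b.im ≠ 0) :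
    Integrable fun x : ℝ => (s.map fun a => ((x : ℂ) - a)⁻¹ - ((x : ℂ) - b)⁻¹).sum :=
  integrable_multiset_sum_map s fun a ha =>
    integrable_inv_ofReal_sub_sub_inv_ofReal_sub (hs a ha) hb

theorem integral_inv_ofReal_sub_sub_inv_ofReal_sub (ha : a.im ≠ 0) (hb : b.im ≠ 0) :
    ∫ x : ℝ, ((x : ℂ) - a)⁻¹ - ((x : ℂ) - b)⁻¹ =
      2 * π * I * ((if 0 < a.im then 1 else 0) - (if 0 < b.im then 1 else 0)) := by
  have hbot := (tendsto_log_ofReal_sub_sub_log_neg_atBot ha).sub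
    (tendsto_log_ofReal_sub_sub_log_neg_atBot hb)
  have htop := (tendsto_log_ofReal_sub_sub_log_atTop a).sub
    (tendsto_log_ofReal_sub_sub_log_atTop b)
  simp only [sub_sub_sub_cancel_right, sub_zero] at hbot htop
  rw [integral_of_hasDerivAt_of_tendsto
    (fun x => (hasDerivAt_log_ofReal_sub ha x).sub (hasDerivAt_log_ofReal_sub hb x))
    (integrable_inv_ofReal_sub_sub_inv_ofReal_sub ha hb) hbot htop]
  split_ifs <;> ring

theorem integral_multiset_sum_inv_ofReal_sub_sub_inv_ofReal_sub {s : Multiset ℂ}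
    (hs : ∀ a ∈ s, a.im ≠ 0) (hb : b.im ≠ 0) :
    ∫ x : ℝ, (s.map fun a => ((x : ℂ) - a)⁻¹ - ((x : ℂ) - b)⁻¹).sum =
      2 * π * I * ((s.filter fun a => 0 < a.im).card -
        Multiset.card s * (if 0 < b.im then 1 else 0)) := by
  rw [integral_multiset_sum_map s fun a ha =>
      integrable_inv_ofReal_sub_sub_inv_ofReal_sub (hs a ha) hb,
    Multiset.map_congr rfl fun a ha => integral_inv_ofReal_sub_sub_inv_ofReal_sub (hs a ha) hb,
    Multiset.sum_map_mul_left, Multiset.sum_map_sub, Multiset.sum_map_ite_one_zero,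
    Multiset.map_const', Multiset.sum_replicate, nsmul_eq_mul]

end Complex

namespace Polynomial

lemma logDeriv_eval_ofReal (p : ℂ[X]) {x : ℝ} (hx : p.eval (x : ℂ) ≠ 0) :
    logDeriv (fun t : ℝ => p.eval (t : ℂ)) x = (p.roots.map fun a => ((x : ℂ) - a)⁻¹).sum := by
  rw [logDeriv_apply, ((p.hasDerivAt (x : ℂ)).comp_ofReal).deriv,
    (IsAlgClosed.splits p).eval_derivative_div_eval_of_ne_zero hx]
  simp only [one_div]

lemma logDeriv_eval_div_eval_ofReal {P Q : ℂ[X]} {x : ℝ} (hP : P.eval (x : ℂ) ≠ 0)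
    (hQ : Q.eval (x : ℂ) ≠ 0) :
    logDeriv (fun t : ℝ => P.eval (t : ℂ) / Q.eval (t : ℂ)) x =
      (P.roots.map fun a => ((x : ℂ) - a)⁻¹).sum - (Q.roots.map fun b => ((x : ℂ) - b)⁻¹).sum := by
  rw [logDeriv_div x hP hQ ((P.hasDerivAt _).comp_ofReal).differentiableAt
    ((Q.hasDerivAt _).comp_ofReal).differentiableAt, P.logDeriv_eval_ofReal hP,
    Q.logDeriv_eval_ofReal hQ]

lemma im_ne_zero_of_mem_roots {p : ℂ[X]} (hp : ∀ x : ℝ, p.eval (x : ℂ) ≠ 0) {a : ℂ}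
    (ha : a ∈ p.roots) : a.im ≠ 0 := fun h => by
  have hreal : (a.re : ℂ) = a := Complex.ext rfl (by simp [h])
  exact hp a.re (by rw [hreal]; exact isRoot_of_mem_roots ha)

end Polynomial

theorem winding_number_rational_general (P Q : Polynomial ℂ)
    (hdeg : P.natDegree = Q.natDegree)
    (hPreal : ∀ x : ℝ, P.eval (x : ℂ) ≠ 0) (hQreal : ∀ x : ℝ, Q.eval (x : ℂ) ≠ 0) :
    (2 * Real.pi * Complex.I)⁻¹ *
        ∫ x : ℝ, deriv (fun t : ℝ => P.eval (t : ℂ) / Q.eval (t : ℂ)) x /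
          (P.eval (x : ℂ) / Q.eval (x : ℂ)) =
      ((P.roots.filter fun z => 0 < z.im).card : ℂ) -
        ((Q.roots.filter fun z => 0 < z.im).card : ℂ) := by
  set g : ℂ → ℝ → ℂ := fun a x => ((x : ℂ) - a)⁻¹ - ((x : ℂ) - I)⁻¹
  have hI : I.im ≠ 0 := by simp
  have hProots := fun a => im_ne_zero_of_mem_roots hPreal (a := a)
  have hQroots := fun b => im_ne_zero_of_mem_roots hQreal (a := b)
  have hcard : Multiset.card P.roots = Multiset.card Q.roots := by
    rw [IsAlgClosed.card_roots_eq_natDegree, IsAlgClosed.card_roots_eq_natDegree, hdeg]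
  have hintegrand : ∀ x : ℝ, deriv (fun t : ℝ => P.eval (t : ℂ) / Q.eval (t : ℂ)) x /
      (P.eval (x : ℂ) / Q.eval (x : ℂ)) =
      (P.roots.map fun a => g a x).sum - (Q.roots.map fun b => g b x).sum := fun x => by
    rw [← logDeriv_apply, logDeriv_eval_div_eval_ofReal (hPreal x) (hQreal x)]
    simp only [g, Multiset.sum_map_sub, Multiset.map_const', Multiset.sum_replicate, hcard]
    abel
  rw [integral_congr_ae (ae_of_all _ hintegrand),
    integral_sub (integrable_multiset_sum_inv_ofReal_sub_sub_inv_ofReal_sub hProots hI)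
      (integrable_multiset_sum_inv_ofReal_sub_sub_inv_ofReal_sub hQroots hI),
    integral_multiset_sum_inv_ofReal_sub_sub_inv_ofReal_sub hProots hI,
    integral_multiset_sum_inv_ofReal_sub_sub_inv_ofReal_sub hQroots hI, hcard]
  field_simp
  ring

/-- **Argument principle for rational functions on the real line.**  Let `R = P/Q` be a
rational function with complex coefficients, with no zeros and no poles on ℝ and with
`deg P = deg Q` (so that `R` has a finite nonzero limit at `∞` and its restriction to the
compactified real line is a closed curve avoiding `0`).  Then the winding number of this
curve about the origin, computed as `(2πi)⁻¹ ∫_ℝ R'(x)/R(x) dx`, equals the number of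
zeros of `R` in the upper half-plane minus the number of poles of `R` in the upper
half-plane, counted with multiplicity. -/
theorem winding_number_rational (P Q : Polynomial ℂ) (hP : P ≠ 0) (hQ : Q ≠ 0)
    (hdeg : P.natDegree = Q.natDegree)
    (hPreal : ∀ x : ℝ, P.eval (x : ℂ) ≠ 0) (hQreal : ∀ x : ℝ, Q.eval (x : ℂ) ≠ 0) :
    (2 * Real.pi * Complex.I)⁻¹ *
        ∫ x : ℝ, deriv (fun t : ℝ => P.eval (t : ℂ) / Q.eval (t : ℂ)) x /
          (P.eval (x : ℂ) / Q.eval (x : ℂ)) =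
      ((P.roots.filter fun z => 0 < z.im).card : ℂ) -
        ((Q.roots.filter fun z => 0 < z.im).card : ℂ) :=
  winding_number_rational_general P Q hdeg hPreal hQreal
end
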